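/- arXiv:2409.08467 — 6 statements merged into one kernel-verified Lean document; each statement's English description precedes it below -/
import Mathlib

section
/- Let H_A, H_B be finite-dimensional Hilbert spaces, |ψ⟩ ∈ H_A ⊗ H_B a unit vector, A_x (x = 1,…,n) Hermitian operators on H_A, B_y (y = 1,…,m) Hermitian operators on H_B with A_x² = I and B_y² = I, and real coefficients α_{xy}. Define the Bell operator 𝓑 = Σ_{x,y} α_{xy} A_x ⊗ B_y, set ω_x = ‖Σ_y α_{xy} (I ⊗ B_y)|ψ⟩‖, assume each ω_x > 0, and let β = Σ_x ω_x. Define M_x = (1/ω_x) Σ_y α_{xy} (I ⊗ B_y) − A_x ⊗ I. Then ⟨ψ| (β·I − 𝓑) |ψ⟩ = Σ_x (ω_x/2) ⟨ψ| M_x† M_x |ψ⟩. -/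
open Matrix Kronecker

lemma kron_conjTranspose {l m p q : Type*} (A : Matrix l m ℂ) (B : Matrix p q ℂ) :
    (A ⊗ₖ B)ᴴ = Aᴴ ⊗ₖ Bᴴ := by
  ext ⟨i, j⟩ ⟨k, l⟩
  simp [Matrix.conjTranspose_apply, Matrix.kroneckerMap_apply, mul_comm]

theorem stmt1 (dA dB n m : ℕ) (ψ : Fin dA × Fin dB → ℂ)
    (hψ : star ψ ⬝ᵥ ψ = 1)
    (A : Fin n → Matrix (Fin dA) (Fin dA) ℂ) (B : Fin m → Matrix (Fin dB) (Fin dB) ℂ)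
    (hA : ∀ x, (A x).IsHermitian) (hB : ∀ y, (B y).IsHermitian)
    (hA2 : ∀ x, A x * A x = 1) (hB2 : ∀ y, B y * B y = 1)
    (α : Fin n → Fin m → ℝ)
    (𝓑 : Matrix (Fin dA × Fin dB) (Fin dA × Fin dB) ℂ)
    (h𝓑 : 𝓑 = ∑ x, ∑ y, (α x y : ℂ) • (A x ⊗ₖ B y))
    (ω : Fin n → ℝ)
    (hω : ∀ x, ω x = Real.sqrt ((star ((∑ y, (α x y : ℂ) •
        ((1 : Matrix (Fin dA) (Fin dA) ℂ) ⊗ₖ B y)) *ᵥ ψ) ⬝ᵥ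
        ((∑ y, (α x y : ℂ) • ((1 : Matrix (Fin dA) (Fin dA) ℂ) ⊗ₖ B y)) *ᵥ ψ))).re)
    (hωpos : ∀ x, 0 < ω x)
    (β : ℝ) (hβ : β = ∑ x, ω x)
    (M : Fin n → Matrix (Fin dA × Fin dB) (Fin dA × Fin dB) ℂ)
    (hM : ∀ x, M x = (((ω x)⁻¹ : ℝ) : ℂ) • (∑ y, (α x y : ℂ) •
        ((1 : Matrix (Fin dA) (Fin dA) ℂ) ⊗ₖ B y))
        - A x ⊗ₖ (1 : Matrix (Fin dB) (Fin dB) ℂ)) :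
    star ψ ⬝ᵥ (((β : ℂ) • (1 : Matrix (Fin dA × Fin dB) (Fin dA × Fin dB) ℂ) - 𝓑) *ᵥ ψ)
      = ∑ x, ((ω x / 2 : ℝ) : ℂ) * (star ψ ⬝ᵥ (((M x)ᴴ * M x) *ᵥ ψ)) := by
  classical
  set C : Fin n → Matrix (Fin dA × Fin dB) (Fin dA × Fin dB) ℂ :=
    fun x => ∑ y, (α x y : ℂ) • ((1 : Matrix (Fin dA) (Fin dA) ℂ) ⊗ₖ B y) with hCdef
  set Q : Matrix (Fin dA × Fin dB) (Fin dA × Fin dB) ℂ → ℂ :=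
    fun N => star ψ ⬝ᵥ (N *ᵥ ψ) with hQdef
  -- C is Hermitian
  have hCH : ∀ x, (C x)ᴴ = C x := by
    intro x
    simp only [hCdef, Matrix.conjTranspose_sum, Matrix.conjTranspose_smul,
      kron_conjTranspose, Matrix.conjTranspose_one, (hB _).eq]
    refine Finset.sum_congr rfl fun y _ => ?_
    rw [Complex.star_def, Complex.conj_ofReal]
  -- D properties
  have hDH : ∀ x, (A x ⊗ₖ (1 : Matrix (Fin dB) (Fin dB) ℂ))ᴴ
      = A x ⊗ₖ (1 : Matrix (Fin dB) (Fin dB) ℂ) := by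
    intro x
    rw [kron_conjTranspose, Matrix.conjTranspose_one, (hA x).eq]
  have hDD : ∀ x, (A x ⊗ₖ (1 : Matrix (Fin dB) (Fin dB) ℂ))
      * (A x ⊗ₖ (1 : Matrix (Fin dB) (Fin dB) ℂ)) = 1 := by
    intro x
    rw [← Matrix.mul_kronecker_mul, hA2, one_mul, Matrix.one_kronecker_one]
  -- D * C = C * D = ∑ α • (A ⊗ B)
  have hDC : ∀ x, (A x ⊗ₖ (1 : Matrix (Fin dB) (Fin dB) ℂ)) * C x
      = ∑ y, (α x y : ℂ) • (A x ⊗ₖ B y) := by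
    intro x
    rw [hCdef, Finset.mul_sum]
    refine Finset.sum_congr rfl fun y _ => ?_
    rw [Matrix.mul_smul, ← Matrix.mul_kronecker_mul, mul_one, one_mul]
  have hCD : ∀ x, C x * (A x ⊗ₖ (1 : Matrix (Fin dB) (Fin dB) ℂ))
      = ∑ y, (α x y : ℂ) • (A x ⊗ₖ B y) := by
    intro x
    rw [hCdef, Finset.sum_mul]
    refine Finset.sum_congr rfl fun y _ => ?_
    rw [Matrix.smul_mul, ← Matrix.mul_kronecker_mul, mul_one, one_mul]
  -- Q (C x * C x) = ω x ^ 2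
  have hQC : ∀ x, Q (C x * C x) = (((ω x : ℂ)) ^ 2) := by
    intro x
    have h1 : Q (C x * C x) = star (C x *ᵥ ψ) ⬝ᵥ (C x *ᵥ ψ) := by
      rw [hQdef]
      simp only []
      rw [Matrix.star_mulVec, ← Matrix.mulVec_mulVec, Matrix.dotProduct_mulVec, hCH]
    have h2 : (star (C x *ᵥ ψ) ⬝ᵥ (C x *ᵥ ψ))
        = ((∑ i, Complex.normSq ((C x *ᵥ ψ) i) : ℝ) : ℂ) := by
      push_cast
      simp [dotProduct, Complex.star_def, Complex.normSq_eq_conj_mul_self]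
    have h3 : (0 : ℝ) ≤ ∑ i, Complex.normSq ((C x *ᵥ ψ) i) :=
      Finset.sum_nonneg fun i _ => Complex.normSq_nonneg _
    have h4 : ω x ^ 2 = ∑ i, Complex.normSq ((C x *ᵥ ψ) i) := by
      rw [hω x]
      rw [show (star ((∑ y, (α x y : ℂ) • ((1 : Matrix (Fin dA) (Fin dA) ℂ) ⊗ₖ B y)) *ᵥ ψ) ⬝ᵥ
        ((∑ y, (α x y : ℂ) • ((1 : Matrix (Fin dA) (Fin dA) ℂ) ⊗ₖ B y)) *ᵥ ψ))
          = star (C x *ᵥ ψ) ⬝ᵥ (C x *ᵥ ψ) from rfl, h2]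
      rw [Real.sq_sqrt]
      · norm_num
      · norm_num [h3]
    rw [h1, h2, ← h4]
    push_cast
    ring
  -- Q is additive etc.
  have hQ1 : Q 1 = 1 := by simp [hQdef, hψ]
  -- expand M x ᴴ * M x
  have hMM : ∀ x, (M x)ᴴ * (M x)
      = ((((ω x)⁻¹ : ℝ) : ℂ) ^ 2) • (C x * C x)
        - (2 * (((ω x)⁻¹ : ℝ) : ℂ)) • (∑ y, (α x y : ℂ) • (A x ⊗ₖ B y)) + 1 := by
    intro x
    rw [hM x]
    rw [show (∑ y, (α x y : ℂ) • ((1 : Matrix (Fin dA) (Fin dA) ℂ) ⊗ₖ B y)) = C x from rfl]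
    rw [show ((((ω x)⁻¹ : ℝ) : ℂ) • C x - A x ⊗ₖ (1 : Matrix (Fin dB) (Fin dB) ℂ))ᴴ
        = (((ω x)⁻¹ : ℝ) : ℂ) • C x - A x ⊗ₖ (1 : Matrix (Fin dB) (Fin dB) ℂ) by
      rw [Matrix.conjTranspose_sub, Matrix.conjTranspose_smul, hCH, hDH,
        Complex.star_def, Complex.conj_ofReal]]
    simp only [sub_mul, mul_sub, Matrix.smul_mul, Matrix.mul_smul, smul_smul]
    rw [hDD, hDC, hCD]
    module
  -- main computation
  have key : ∀ x, ((ω x / 2 : ℝ) : ℂ) * Q ((M x)ᴴ * M x)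
      = (ω x : ℂ) - Q (∑ y, (α x y : ℂ) • (A x ⊗ₖ B y)) := by
    intro x
    have hQadd : Q ((((ω x)⁻¹ : ℝ) : ℂ) ^ 2 • (C x * C x)
        - (2 * (((ω x)⁻¹ : ℝ) : ℂ)) • (∑ y, (α x y : ℂ) • (A x ⊗ₖ B y)) + 1)
        = ((((ω x)⁻¹ : ℝ) : ℂ) ^ 2) * Q (C x * C x)
          - (2 * (((ω x)⁻¹ : ℝ) : ℂ)) * Q (∑ y, (α x y : ℂ) • (A x ⊗ₖ B y)) + Q 1 := by
      simp [hQdef, Matrix.add_mulVec, Matrix.sub_mulVec, Matrix.smul_mulVec,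
        dotProduct_add, dotProduct_sub, dotProduct_smul, smul_eq_mul]
    rw [hMM x, hQadd, hQC x, hQ1]
    have hne : (ω x : ℂ) ≠ 0 := by
      exact_mod_cast ne_of_gt (hωpos x)
    push_cast
    field_simp
    ring
  -- both sides
  have hL : star ψ ⬝ᵥ (((β : ℂ) • (1 : Matrix (Fin dA × Fin dB) (Fin dA × Fin dB) ℂ) - 𝓑) *ᵥ ψ)
      = (β : ℂ) - Q 𝓑 := by
    simp [hQdef, Matrix.sub_mulVec, Matrix.smul_mulVec, dotProduct_sub,
      dotProduct_smul, smul_eq_mul, hψ]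
  have hQB : Q 𝓑 = ∑ x, Q (∑ y, (α x y : ℂ) • (A x ⊗ₖ B y)) := by
    rw [h𝓑, hQdef]
    simp only []
    have : ∀ (F : Fin n → Matrix (Fin dA × Fin dB) (Fin dA × Fin dB) ℂ),
        star ψ ⬝ᵥ ((∑ x, F x) *ᵥ ψ) = ∑ x, star ψ ⬝ᵥ (F x *ᵥ ψ) := by
      intro F
      have h1 : (∑ x, F x) *ᵥ ψ = ∑ x, F x *ᵥ ψ := by
        ext j
        simp only [Matrix.mulVec, dotProduct, Matrix.sum_apply,
          Finset.sum_mul, Finset.sum_apply]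
        rw [Finset.sum_comm]
      rw [h1]
      simp only [dotProduct, Finset.sum_apply, Finset.mul_sum]
      rw [Finset.sum_comm]
    exact this _
  calc star ψ ⬝ᵥ (((β : ℂ) • (1 : Matrix (Fin dA × Fin dB) (Fin dA × Fin dB) ℂ) - 𝓑) *ᵥ ψ)
      = (β : ℂ) - Q 𝓑 := hL
    _ = ∑ x, ((ω x : ℂ) - Q (∑ y, (α x y : ℂ) • (A x ⊗ₖ B y))) := by
        rw [hQB, hβ, Finset.sum_sub_distrib]
        push_cast
        ring
    _ = ∑ x, ((ω x / 2 : ℝ) : ℂ) * Q ((M x)ᴴ * M x) := by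
        refine Finset.sum_congr rfl fun x _ => (key x).symm
    _ = ∑ x, ((ω x / 2 : ℝ) : ℂ) * (star ψ ⬝ᵥ (((M x)ᴴ * M x) *ᵥ ψ)) := rfl
end

section
/- Under the hypotheses of the SOS identity (dichotomic observables A_x, B_y with squares equal to I, ω_x = ‖Σ_y α_{xy}(I⊗B_y)|ψ⟩‖), the expectation of the Bell operator satisfies ⟨ψ|𝓑|ψ⟩ ≤ Σ_x ω_x. -/
/-!
Write `𝓑 = ∑ₓ (Aₓ ⊗ I) Mₓ` with `Mₓ = ∑_y α_{xy} (I ⊗ B_y)`. Since `Aₓ ⊗ I` is a Hermitian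
involution, `⟨ψ|(Aₓ ⊗ I) Mₓ|ψ⟩ = ⟨(Aₓ ⊗ I)ψ, Mₓψ⟩` with `‖(Aₓ ⊗ I)ψ‖ = ‖ψ‖ = 1`, so
Cauchy–Schwarz bounds the real part of each term by `‖Mₓψ‖ = ωₓ`.
-/

open Matrix Kronecker

namespace Matrix

variable {𝕜 : Type*} [RCLike 𝕜] {ι : Type*} [Fintype ι]

theorem re_star_dotProduct_le (u v : ι → 𝕜) :
    RCLike.re (star u ⬝ᵥ v) ≤ √(RCLike.re (star u ⬝ᵥ u)) * √(RCLike.re (star v ⬝ᵥ v)) := by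
  have hinner : ∀ a b : ι → 𝕜, star a ⬝ᵥ b = inner 𝕜 (WithLp.toLp 2 a) (WithLp.toLp 2 b) :=
    fun a b => (dotProduct_comm _ _).trans (EuclideanSpace.inner_toLp_toLp a b).symm
  simpa only [hinner, ← norm_eq_sqrt_re_inner] using re_inner_le_norm _ _

theorem IsHermitian.kronecker {R : Type*} [CommSemiring R] [StarRing R] {l m : Type*}
    {A : Matrix l l R} {B : Matrix m m R} (hA : A.IsHermitian) (hB : B.IsHermitian) :
    (A ⊗ₖ B).IsHermitian := by
  rw [IsHermitian, conjTranspose_kronecker, hA.eq, hB.eq]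

theorem star_mulVec_dotProduct_mulVec_of_conjTranspose_mul_self [DecidableEq ι] {U : Matrix ι ι 𝕜}
    (hU : Uᴴ * U = 1) (v w : ι → 𝕜) : star (U *ᵥ v) ⬝ᵥ (U *ᵥ w) = star v ⬝ᵥ w := by
  rw [star_mulVec, ← dotProduct_mulVec, mulVec_mulVec, hU, one_mulVec]

theorem star_dotProduct_mul_mulVec_of_isHermitian {U : Matrix ι ι 𝕜} (hU : U.IsHermitian)
    (M : Matrix ι ι 𝕜) (v w : ι → 𝕜) :
    star v ⬝ᵥ ((U * M) *ᵥ w) = star (U *ᵥ v) ⬝ᵥ (M *ᵥ w) := by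
  rw [← mulVec_mulVec, dotProduct_mulVec, star_mulVec, hU.eq]

theorem re_star_dotProduct_mul_mulVec_le [DecidableEq ι] {U : Matrix ι ι 𝕜} (hU : U.IsHermitian)
    (hU2 : U * U = 1) (M : Matrix ι ι 𝕜) {ψ : ι → 𝕜} (hψ : star ψ ⬝ᵥ ψ = 1) :
    RCLike.re (star ψ ⬝ᵥ ((U * M) *ᵥ ψ)) ≤ √(RCLike.re (star (M *ᵥ ψ) ⬝ᵥ (M *ᵥ ψ))) := by
  have hUψ : star (U *ᵥ ψ) ⬝ᵥ (U *ᵥ ψ) = 1 := by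
    rw [star_mulVec_dotProduct_mulVec_of_conjTranspose_mul_self (hU.eq.symm ▸ hU2), hψ]
  calc RCLike.re (star ψ ⬝ᵥ ((U * M) *ᵥ ψ))
      = RCLike.re (star (U *ᵥ ψ) ⬝ᵥ (M *ᵥ ψ)) := by
        rw [star_dotProduct_mul_mulVec_of_isHermitian hU]
    _ ≤ √(RCLike.re (star (U *ᵥ ψ) ⬝ᵥ (U *ᵥ ψ))) * √(RCLike.re (star (M *ᵥ ψ) ⬝ᵥ (M *ᵥ ψ))) :=
        re_star_dotProduct_le _ _
    _ = √(RCLike.re (star (M *ᵥ ψ) ⬝ᵥ (M *ᵥ ψ))) := by simp [hUψ]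

theorem sum_smul_kronecker_eq_kronecker_one_mul {R : Type*} [CommSemiring R] {l m κ : Type*}
    [Fintype l] [DecidableEq l] [Fintype m] [DecidableEq m] [Fintype κ]
    (c : κ → R) (A : Matrix l l R) (B : κ → Matrix m m R) :
    ∑ y, c y • (A ⊗ₖ B y) = (A ⊗ₖ (1 : Matrix m m R)) * ∑ y, c y • ((1 : Matrix l l R) ⊗ₖ B y) := by
  simp only [Matrix.mul_sum, Matrix.mul_smul, ← mul_kronecker_mul, mul_one, one_mul]

theorem kronecker_one_mul_self {R : Type*} [CommSemiring R] {l m : Type*}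
    [Fintype l] [DecidableEq l] [Fintype m] [DecidableEq m] {A : Matrix l l R}
    (hA : A * A = 1) : (A ⊗ₖ (1 : Matrix m m R)) * (A ⊗ₖ 1) = 1 := by
  rw [← mul_kronecker_mul, hA, one_mul, one_kronecker_one]

end Matrix

theorem stmt2_general (dA dB n m : ℕ) (ψ : Fin dA × Fin dB → ℂ)
    (hψ : star ψ ⬝ᵥ ψ = 1)
    (A : Fin n → Matrix (Fin dA) (Fin dA) ℂ) (B : Fin m → Matrix (Fin dB) (Fin dB) ℂ)
    (hA : ∀ x, (A x).IsHermitian)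
    (hA2 : ∀ x, A x * A x = 1)
    (α : Fin n → Fin m → ℝ)
    (𝓑 : Matrix (Fin dA × Fin dB) (Fin dA × Fin dB) ℂ)
    (h𝓑 : 𝓑 = ∑ x, ∑ y, (α x y : ℂ) • (A x ⊗ₖ B y))
    (ω : Fin n → ℝ)
    (hω : ∀ x, ω x = Real.sqrt ((star ((∑ y, (α x y : ℂ) •
        ((1 : Matrix (Fin dA) (Fin dA) ℂ) ⊗ₖ B y)) *ᵥ ψ) ⬝ᵥ
        ((∑ y, (α x y : ℂ) • ((1 : Matrix (Fin dA) (Fin dA) ℂ) ⊗ₖ B y)) *ᵥ ψ))).re) :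
    (star ψ ⬝ᵥ (𝓑 *ᵥ ψ)).re ≤ ∑ x, ω x := by
  rw [h𝓑, Finset.sum_congr rfl fun x _ =>
    sum_smul_kronecker_eq_kronecker_one_mul (fun y => (α x y : ℂ)) (A x) B]
  simp only [sum_mulVec, dotProduct_sum, Complex.re_sum]
  refine Finset.sum_le_sum fun x _ => ?_
  rw [hω x]
  exact re_star_dotProduct_mul_mulVec_le ((hA x).kronecker isHermitian_one)
    (kronecker_one_mul_self (hA2 x)) _ hψ

theorem stmt2 (dA dB n m : ℕ) (ψ : Fin dA × Fin dB → ℂ)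
    (hψ : star ψ ⬝ᵥ ψ = 1)
    (A : Fin n → Matrix (Fin dA) (Fin dA) ℂ) (B : Fin m → Matrix (Fin dB) (Fin dB) ℂ)
    (hA : ∀ x, (A x).IsHermitian) (hB : ∀ y, (B y).IsHermitian)
    (hA2 : ∀ x, A x * A x = 1) (hB2 : ∀ y, B y * B y = 1)
    (α : Fin n → Fin m → ℝ)
    (𝓑 : Matrix (Fin dA × Fin dB) (Fin dA × Fin dB) ℂ)
    (h𝓑 : 𝓑 = ∑ x, ∑ y, (α x y : ℂ) • (A x ⊗ₖ B y))
    (ω : Fin n → ℝ)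
    (hω : ∀ x, ω x = Real.sqrt ((star ((∑ y, (α x y : ℂ) •
        ((1 : Matrix (Fin dA) (Fin dA) ℂ) ⊗ₖ B y)) *ᵥ ψ) ⬝ᵥ
        ((∑ y, (α x y : ℂ) • ((1 : Matrix (Fin dA) (Fin dA) ℂ) ⊗ₖ B y)) *ᵥ ψ))).re) :
    (star ψ ⬝ᵥ (𝓑 *ᵥ ψ)).re ≤ ∑ x, ω x :=
  stmt2_general dA dB n m ψ hψ A B hA hA2 α 𝓑 h𝓑 ω hω
end

section
/- For any Hermitian operators A₀, A₁, B₀, B₁ on C² with A_x² = B_y² = I, and any unit vector |ψ⟩ ∈ C²⊗C², the CHSH expectation satisfies ⟨ψ| A₀⊗B₀ + A₀⊗B₁ + A₁⊗B₀ − A₁⊗B₁ |ψ⟩ ≤ 2√2. -/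
open Matrix Kronecker

theorem keylem {R : Type*} [Ring R] [Algebra ℂ R] (a a' b b' : R) (k : ℂ)
    (hk : k * k = 2⁻¹)
    (ha : a*a = 1) (ha' : a'*a' = 1) (hb : b*b = 1) (hb' : b'*b' = 1)
    (h1 : b*a = a*b) (h2 : b'*a = a*b') (h3 : b*a' = a'*b) (h4 : b'*a' = a'*b') :
    a*b + a*b' + a'*b - a'*b'
      = k • ((4:ℂ) • (1:R) - (a - k•(b+b'))*(a - k•(b+b')) - (a' - k•(b-b'))*(a' - k•(b-b'))) := by
  simp only [sub_mul, mul_sub, add_mul, mul_add, smul_mul_assoc, mul_smul_comm, smul_smul,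
    smul_sub, smul_add, ha, ha', hb, hb', h1, h2, h3, h4, hk]
  module

theorem kronCT (A B : Matrix (Fin 2) (Fin 2) ℂ) : (A ⊗ₖ B)ᴴ = Aᴴ ⊗ₖ Bᴴ := by
  ext ⟨i,j⟩ ⟨p,q⟩
  simp [conjTranspose_apply, kroneckerMap_apply, star_mul']

-- expectation of square of a hermitian matrix is nonneg (as a complex number ≥ 0)
open scoped ComplexOrder in
theorem sq_exp_nonneg {n : Type*} [Fintype n] (P : Matrix n n ℂ) (hP : Pᴴ = P)
    (ψ : n → ℂ) : 0 ≤ star ψ ⬝ᵥ ((P * P) *ᵥ ψ) := by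
  have h : star ψ ⬝ᵥ ((P * P) *ᵥ ψ) = star (P *ᵥ ψ) ⬝ᵥ (P *ᵥ ψ) := by
    rw [← mulVec_mulVec, star_mulVec, hP, dotProduct_mulVec]
  rw [h]
  exact dotProduct_star_self_nonneg _

theorem stmt5 (A₀ A₁ B₀ B₁ : Matrix (Fin 2) (Fin 2) ℂ)
    (hA0 : A₀.IsHermitian) (hA1 : A₁.IsHermitian)
    (hB0 : B₀.IsHermitian) (hB1 : B₁.IsHermitian)
    (hA02 : A₀ * A₀ = 1) (hA12 : A₁ * A₁ = 1)
    (hB02 : B₀ * B₀ = 1) (hB12 : B₁ * B₁ = 1)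
    (ψ : Fin 2 × Fin 2 → ℂ) (hψ : star ψ ⬝ᵥ ψ = 1) :
    (star ψ ⬝ᵥ ((A₀ ⊗ₖ B₀ + A₀ ⊗ₖ B₁ + A₁ ⊗ₖ B₀ - A₁ ⊗ₖ B₁) *ᵥ ψ)).re
      ≤ 2 * Real.sqrt 2 := by
  set k : ℂ := (Real.sqrt 2 : ℂ)⁻¹ with hkdef
  have hs2 : (Real.sqrt 2 : ℝ) * Real.sqrt 2 = 2 := Real.mul_self_sqrt (by norm_num)
  have hk : k * k = 2⁻¹ := by
    rw [hkdef, ← mul_inv]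
    norm_num [← Complex.ofReal_mul, hs2]
  set a : Matrix (Fin 2 × Fin 2) (Fin 2 × Fin 2) ℂ := A₀ ⊗ₖ 1 with hadef
  set a' : Matrix (Fin 2 × Fin 2) (Fin 2 × Fin 2) ℂ := A₁ ⊗ₖ 1 with ha'def
  set b : Matrix (Fin 2 × Fin 2) (Fin 2 × Fin 2) ℂ := (1 : Matrix (Fin 2) (Fin 2) ℂ) ⊗ₖ B₀ with hbdef
  set b' : Matrix (Fin 2 × Fin 2) (Fin 2 × Fin 2) ℂ := (1 : Matrix (Fin 2) (Fin 2) ℂ) ⊗ₖ B₁ with hb'def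
  have ha : a * a = 1 := by rw [hadef, ← mul_kronecker_mul, hA02, one_mul, one_kronecker_one]
  have ha' : a' * a' = 1 := by rw [ha'def, ← mul_kronecker_mul, hA12, one_mul, one_kronecker_one]
  have hb : b * b = 1 := by rw [hbdef, ← mul_kronecker_mul, hB02, one_mul, one_kronecker_one]
  have hb' : b' * b' = 1 := by rw [hb'def, ← mul_kronecker_mul, hB12, one_mul, one_kronecker_one]
  have comm : ∀ (X Y : Matrix (Fin 2) (Fin 2) ℂ),
      ((1 : Matrix (Fin 2) (Fin 2) ℂ) ⊗ₖ Y) * (X ⊗ₖ 1) = (X ⊗ₖ 1) * (1 ⊗ₖ Y) := by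
    intro X Y
    rw [← mul_kronecker_mul, ← mul_kronecker_mul, one_mul, mul_one, one_mul, mul_one]
  have hmulk : ∀ (X Y : Matrix (Fin 2) (Fin 2) ℂ), X ⊗ₖ Y = (X ⊗ₖ 1) * (1 ⊗ₖ Y) := by
    intro X Y
    rw [← mul_kronecker_mul, one_mul, mul_one]
  have key := keylem a a' b b' k hk ha ha' hb hb' (comm A₀ B₀) (comm A₀ B₁) (comm A₁ B₀) (comm A₁ B₁)
  set P : Matrix (Fin 2 × Fin 2) (Fin 2 × Fin 2) ℂ := a - k•(b+b') with hPdef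
  set Q : Matrix (Fin 2 × Fin 2) (Fin 2 × Fin 2) ℂ := a' - k•(b-b') with hQdef
  have hC : A₀ ⊗ₖ B₀ + A₀ ⊗ₖ B₁ + A₁ ⊗ₖ B₀ - A₁ ⊗ₖ B₁
      = k • ((4:ℂ) • (1 : Matrix (Fin 2 × Fin 2) (Fin 2 × Fin 2) ℂ) - P*P - Q*Q) := by
    rw [hmulk A₀ B₀, hmulk A₀ B₁, hmulk A₁ B₀, hmulk A₁ B₁]
    exact key
  -- Hermitian-ness of P and Q
  have hkstar : star k = k := by
    rw [hkdef]
    simp [star_inv₀, Complex.star_def, Complex.conj_ofReal]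
  have hCT : ∀ (X Y : Matrix (Fin 2) (Fin 2) ℂ), Xᴴ = X → Yᴴ = Y → (X ⊗ₖ Y)ᴴ = X ⊗ₖ Y := by
    intro X Y hX hY; rw [kronCT, hX, hY]
  have h1H : (1 : Matrix (Fin 2) (Fin 2) ℂ)ᴴ = 1 := conjTranspose_one
  have hPH : Pᴴ = P := by
    rw [hPdef, conjTranspose_sub, conjTranspose_smul, conjTranspose_add,
      hCT A₀ 1 hA0 h1H, hCT 1 B₀ h1H hB0, hCT 1 B₁ h1H hB1, hkstar]
  have hQH : Qᴴ = Q := by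
    rw [hQdef, conjTranspose_sub, conjTranspose_smul, conjTranspose_sub,
      hCT A₁ 1 hA1 h1H, hCT 1 B₀ h1H hB0, hCT 1 B₁ h1H hB1, hkstar]
  -- compute the expectation
  rw [hC]
  rw [smul_mulVec, dotProduct_smul]
  have expand : star ψ ⬝ᵥ (((4:ℂ) • (1 : Matrix (Fin 2 × Fin 2) (Fin 2 × Fin 2) ℂ) - P*P - Q*Q) *ᵥ ψ)
      = 4 - star ψ ⬝ᵥ ((P*P) *ᵥ ψ) - star ψ ⬝ᵥ ((Q*Q) *ᵥ ψ) := by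
    rw [sub_mulVec, sub_mulVec, dotProduct_sub, dotProduct_sub, smul_mulVec,
      dotProduct_smul, one_mulVec, hψ]
    norm_num
  rw [expand]
  have hp := sq_exp_nonneg P hPH ψ
  have hq := sq_exp_nonneg Q hQH ψ
  rw [Complex.le_def] at hp hq
  simp only [Complex.zero_re, Complex.zero_im] at hp hq
  have hkre : k.re = (Real.sqrt 2)⁻¹ := by
    rw [hkdef, ← Complex.ofReal_inv, Complex.ofReal_re]
  have hkim : k.im = 0 := by
    rw [hkdef, ← Complex.ofReal_inv, Complex.ofReal_im]
  rw [smul_eq_mul, Complex.mul_re, hkim, hkre]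
  simp only [zero_mul, sub_zero]
  have hre : ((4 : ℂ) - star ψ ⬝ᵥ ((P*P) *ᵥ ψ) - star ψ ⬝ᵥ ((Q*Q) *ᵥ ψ)).re ≤ 4 := by
    simp only [Complex.sub_re]
    norm_num
    linarith [hp.1, hq.1]
  have hspos : (0:ℝ) < Real.sqrt 2 := Real.sqrt_pos.mpr (by norm_num)
  calc (Real.sqrt 2)⁻¹ * ((4:ℂ) - star ψ ⬝ᵥ ((P*P) *ᵥ ψ) - star ψ ⬝ᵥ ((Q*Q) *ᵥ ψ)).re
      ≤ (Real.sqrt 2)⁻¹ * 4 := by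
        apply mul_le_mul_of_nonneg_left hre (by positivity)
    _ = 2 * Real.sqrt 2 := by
        field_simp
        linarith [hs2]
end

section
/- Let α ≥ 1 and consider the generalized CHSH operator 𝓑_α = α A₀⊗B₀ + α A₀⊗B₁ + A₁⊗B₀ − A₁⊗B₁ with A₀ = Z, A₁ = X, B₀ = (αZ+X)/√(α²+1), B₁ = (αZ−X)/√(α²+1), and |ψ⟩ = (|00⟩+|11⟩)/√2. Then ⟨ψ|𝓑_α|ψ⟩ = 2√(α²+1). -/
open Matrix Kronecker

theorem stmt6 (α : ℝ) (hα : 1 ≤ α)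
    (X Z A₀ A₁ B₀ B₁ : Matrix (Fin 2) (Fin 2) ℂ)
    (hX : X = !![0, 1; 1, 0]) (hZ : Z = !![1, 0; 0, -1])
    (hA0 : A₀ = Z) (hA1 : A₁ = X)
    (hB0 : B₀ = (((Real.sqrt (α ^ 2 + 1))⁻¹ : ℝ) : ℂ) • ((α : ℂ) • Z + X))
    (hB1 : B₁ = (((Real.sqrt (α ^ 2 + 1))⁻¹ : ℝ) : ℂ) • ((α : ℂ) • Z - X))
    (ψ : Fin 2 × Fin 2 → ℂ)
    (hψ : ψ = fun p => if p.1 = p.2 then ((Real.sqrt 2)⁻¹ : ℂ) else 0)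
    (𝓑 : Matrix (Fin 2 × Fin 2) (Fin 2 × Fin 2) ℂ)
    (h𝓑 : 𝓑 = (α : ℂ) • (A₀ ⊗ₖ B₀) + (α : ℂ) • (A₀ ⊗ₖ B₁) + A₁ ⊗ₖ B₀ - A₁ ⊗ₖ B₁) :
    star ψ ⬝ᵥ (𝓑 *ᵥ ψ) = (2 * Real.sqrt (α ^ 2 + 1) : ℂ) := by
  have hs : (0:ℝ) < α ^ 2 + 1 := by positivity
  have hsq : (Real.sqrt (α ^ 2 + 1)) ^ 2 = α ^ 2 + 1 := Real.sq_sqrt hs.le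
  have hsne : (Real.sqrt (α ^ 2 + 1) : ℂ) ≠ 0 :=
    Complex.ofReal_ne_zero.2 ((Real.sqrt_ne_zero'.2 hs))
  have h2 : ((Real.sqrt 2 : ℂ))⁻¹ * (Real.sqrt 2 : ℂ)⁻¹ = 2⁻¹ := by
    rw [← mul_inv]
    norm_cast
    rw [Real.mul_self_sqrt (by norm_num)]
    norm_num
  subst h𝓑 hψ hB0 hB1 hA0 hA1 hX hZ
  simp only [dotProduct, mulVec, Fintype.sum_prod_type, Fin.sum_univ_two,
    kroneckerMap_apply, Matrix.sub_apply, Matrix.add_apply, Matrix.smul_apply,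
    Matrix.cons_val', Matrix.cons_val_zero, Matrix.cons_val_one, Matrix.head_cons,
    Matrix.head_fin_const, Matrix.empty_val', Matrix.cons_val_fin_one, smul_eq_mul,
    Pi.star_apply]
  norm_num
  field_simp
  ring_nf
  have c1 : ((Real.sqrt 2 : ℂ))^2 = 2 := by
    norm_cast; exact_mod_cast Real.sq_sqrt (by norm_num)
  have c2 : ((Real.sqrt (1 + α^2) : ℂ))^2 = 1 + α^2 := by
    norm_cast; exact_mod_cast Real.sq_sqrt (by positivity)
  rw [c1, c2]; ring
end

section
/- For any Hermitian A₀, A₁, B₀, B₁ on C² with squares equal to I, any unit |ψ⟩ ∈ C²⊗C², and any α > 0, the generalized CHSH expectation satisfies ⟨ψ| αA₀⊗B₀ + αA₀⊗B₁ + A₁⊗B₀ − A₁⊗B₁ |ψ⟩ ≤ 2√(α²+1). -/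
/-!
Since `⟨ψ| A ⊗ B |ψ⟩ = ⟨(Aᴴ ⊗ 1) ψ, (1 ⊗ B) ψ⟩`, the expectation equals
`α Re ⟨a₀, u + v⟩ + Re ⟨a₁, u - v⟩` for unit vectors `a₀ = (A₀ᴴ ⊗ 1) ψ`, `a₁ = (A₁ᴴ ⊗ 1) ψ`,
`u = (1 ⊗ B₀) ψ`, `v = (1 ⊗ B₁) ψ` (a Hermitian matrix squaring to `I` is unitary).
Cauchy–Schwarz bounds the two real parts `x`, `y` by `‖u + v‖` and `‖u - v‖`, whose squares
sum to `4` by the parallelogram law, and Cauchy–Schwarz in `ℝ²` gives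
`α x + y ≤ √(α² + 1) √(x² + y²) ≤ 2 √(α² + 1)`.
-/

open Matrix Kronecker

theorem mul_add_le_two_mul_sqrt {α x y : ℝ} (h : x ^ 2 + y ^ 2 ≤ 4) :
    α * x + y ≤ 2 * √(α ^ 2 + 1) := by
  have hcs : (α * x + y) ^ 2 ≤ (α ^ 2 + 1) * (x ^ 2 + y ^ 2) := by
    nlinarith [sq_nonneg (α * y - x)]
  rw [show 2 * √(α ^ 2 + 1) = √(4 * (α ^ 2 + 1)) by
    rw [Real.sqrt_mul' _ (by positivity), show (4 : ℝ) = 2 ^ 2 by norm_num,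
      Real.sqrt_sq two_pos.le]]
  exact Real.le_sqrt_of_sq_le (hcs.trans (by nlinarith))

section InnerProductSpace

open RCLike

variable {𝕜 E : Type*} [RCLike 𝕜] [NormedAddCommGroup E] [InnerProductSpace 𝕜 E]

theorem sq_re_inner_le_of_norm_le_one {a : E} (ha : ‖a‖ ≤ 1) (w : E) :
    re (inner 𝕜 a w) ^ 2 ≤ ‖w‖ ^ 2 := by
  rw [← sq_abs]
  gcongr
  calc |re (inner 𝕜 a w)| ≤ ‖inner 𝕜 a w‖ := abs_re_le_norm _
    _ ≤ ‖a‖ * ‖w‖ := norm_inner_le_norm a w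
    _ ≤ ‖w‖ := mul_le_of_le_one_left (norm_nonneg w) ha

theorem re_inner_chsh_le {a₀ a₁ u v : E} (ha₀ : ‖a₀‖ ≤ 1) (ha₁ : ‖a₁‖ ≤ 1)
    (hu : ‖u‖ ≤ 1) (hv : ‖v‖ ≤ 1) (α : ℝ) :
    α * re (inner 𝕜 a₀ (u + v)) + re (inner 𝕜 a₁ (u - v)) ≤ 2 * √(α ^ 2 + 1) := by
  apply mul_add_le_two_mul_sqrt
  have hpar : ‖u + v‖ ^ 2 + ‖u - v‖ ^ 2 = 2 * (‖u‖ ^ 2 + ‖v‖ ^ 2) := by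
    simpa only [sq, add_mul] using parallelogram_law_with_norm 𝕜 u v
  nlinarith [sq_re_inner_le_of_norm_le_one (𝕜 := 𝕜) ha₀ (u + v),
    sq_re_inner_le_of_norm_le_one (𝕜 := 𝕜) ha₁ (u - v), norm_nonneg u, norm_nonneg v]

end InnerProductSpace

namespace Matrix

open RCLike

variable {𝕜 l m n : Type*} [RCLike 𝕜] [Fintype l] [Fintype m] [Fintype n]

theorem star_dotProduct_eq_inner (x y : n → 𝕜) :
    star x ⬝ᵥ y = inner 𝕜 (WithLp.toLp 2 x) (WithLp.toLp 2 y) := by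
  rw [EuclideanSpace.inner_toLp_toLp, dotProduct_comm]

theorem star_mulVec_dotProduct_mulVec (M : Matrix l m 𝕜) (N : Matrix l n 𝕜) (v : m → 𝕜)
    (w : n → 𝕜) : star (M *ᵥ v) ⬝ᵥ (N *ᵥ w) = star v ⬝ᵥ ((Mᴴ * N) *ᵥ w) := by
  rw [star_mulVec, ← dotProduct_mulVec, mulVec_mulVec]

theorem norm_toLp_mulVec_of_mem_unitaryGroup [DecidableEq n] {U : Matrix n n 𝕜}
    (hU : U ∈ unitaryGroup n 𝕜) (v : n → 𝕜) :
    ‖WithLp.toLp 2 (U *ᵥ v)‖ = ‖WithLp.toLp 2 v‖ := by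
  rw [← sq_eq_sq₀ (norm_nonneg _) (norm_nonneg _), ← inner_self_eq_norm_sq (𝕜 := 𝕜),
    ← inner_self_eq_norm_sq (𝕜 := 𝕜), ← star_dotProduct_eq_inner, ← star_dotProduct_eq_inner,
    star_mulVec_dotProduct_mulVec, ← star_eq_conjTranspose, (mem_unitaryGroup_iff').1 hU,
    one_mulVec]

theorem norm_toLp_eq_one_of_star_dotProduct_self {ψ : n → 𝕜} (hψ : star ψ ⬝ᵥ ψ = 1) :
    ‖WithLp.toLp 2 ψ‖ = 1 := by
  have h := inner_self_eq_norm_sq_to_K (𝕜 := 𝕜) (WithLp.toLp 2 ψ)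
  rw [← star_dotProduct_eq_inner, hψ] at h
  exact (pow_eq_one_iff_of_nonneg (norm_nonneg _) two_ne_zero).1 (by exact_mod_cast h.symm)

theorem IsHermitian.mem_unitaryGroup_of_mul_self [DecidableEq n] {A : Matrix n n 𝕜}
    (hA : A.IsHermitian) (hA2 : A * A = 1) : A ∈ unitaryGroup n 𝕜 := by
  rwa [mem_unitaryGroup_iff, star_eq_conjTranspose, hA.eq]

theorem star_dotProduct_kronecker_mulVec [DecidableEq l] [DecidableEq m]
    (A : Matrix l l 𝕜) (B : Matrix m m 𝕜) (ψ : l × m → 𝕜) :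
    star ψ ⬝ᵥ ((A ⊗ₖ B) *ᵥ ψ) = star ((Aᴴ ⊗ₖ 1) *ᵥ ψ) ⬝ᵥ ((1 ⊗ₖ B) *ᵥ ψ) := by
  rw [star_mulVec_dotProduct_mulVec, conjTranspose_kronecker, conjTranspose_conjTranspose,
    conjTranspose_one, ← mul_kronecker_mul, mul_one, one_mul]

theorem re_star_dotProduct_chsh_mulVec_le [DecidableEq l] [DecidableEq m]
    {A₀ A₁ : Matrix l l 𝕜} {B₀ B₁ : Matrix m m 𝕜}
    (hA₀ : A₀ ∈ unitaryGroup l 𝕜) (hA₁ : A₁ ∈ unitaryGroup l 𝕜)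
    (hB₀ : B₀ ∈ unitaryGroup m 𝕜) (hB₁ : B₁ ∈ unitaryGroup m 𝕜)
    {ψ : l × m → 𝕜} (hψ : star ψ ⬝ᵥ ψ = 1) (α : ℝ) :
    re (star ψ ⬝ᵥ (((α : 𝕜) • (A₀ ⊗ₖ B₀) + (α : 𝕜) • (A₀ ⊗ₖ B₁)
      + A₁ ⊗ₖ B₀ - A₁ ⊗ₖ B₁) *ᵥ ψ)) ≤ 2 * √(α ^ 2 + 1) := by
  have hnorm {U : Matrix (l × m) (l × m) 𝕜} (hU : U ∈ unitaryGroup (l × m) 𝕜) :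
      ‖WithLp.toLp 2 (U *ᵥ ψ)‖ ≤ 1 :=
    ((norm_toLp_mulVec_of_mem_unitaryGroup hU ψ).trans
      (norm_toLp_eq_one_of_star_dotProduct_self hψ)).le
  simp only [sub_mulVec, add_mulVec, smul_mulVec, dotProduct_sub, dotProduct_add,
    dotProduct_smul, star_dotProduct_kronecker_mulVec, smul_eq_mul]
  simp only [star_dotProduct_eq_inner, ← mul_add, ← inner_add_right, add_sub_assoc,
    ← inner_sub_right, map_add, re_ofReal_mul]
  exact re_inner_chsh_le (𝕜 := 𝕜)
    (hnorm (kronecker_mem_unitary (Unitary.star_mem hA₀) (one_mem _)))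
    (hnorm (kronecker_mem_unitary (Unitary.star_mem hA₁) (one_mem _)))
    (hnorm (kronecker_mem_unitary (one_mem _) hB₀))
    (hnorm (kronecker_mem_unitary (one_mem _) hB₁)) α

end Matrix

theorem stmt7_general (α : ℝ)
    (A₀ A₁ B₀ B₁ : Matrix (Fin 2) (Fin 2) ℂ)
    (hA0 : A₀.IsHermitian) (hA1 : A₁.IsHermitian)
    (hB0 : B₀.IsHermitian) (hB1 : B₁.IsHermitian)
    (hA02 : A₀ * A₀ = 1) (hA12 : A₁ * A₁ = 1)
    (hB02 : B₀ * B₀ = 1) (hB12 : B₁ * B₁ = 1)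
    (ψ : Fin 2 × Fin 2 → ℂ) (hψ : star ψ ⬝ᵥ ψ = 1) :
    (star ψ ⬝ᵥ (((α : ℂ) • (A₀ ⊗ₖ B₀) + (α : ℂ) • (A₀ ⊗ₖ B₁)
        + A₁ ⊗ₖ B₀ - A₁ ⊗ₖ B₁) *ᵥ ψ)).re ≤ 2 * Real.sqrt (α ^ 2 + 1) :=
  re_star_dotProduct_chsh_mulVec_le (hA0.mem_unitaryGroup_of_mul_self hA02)
    (hA1.mem_unitaryGroup_of_mul_self hA12) (hB0.mem_unitaryGroup_of_mul_self hB02)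
    (hB1.mem_unitaryGroup_of_mul_self hB12) hψ α

theorem stmt7 (α : ℝ) (hα : 0 < α)
    (A₀ A₁ B₀ B₁ : Matrix (Fin 2) (Fin 2) ℂ)
    (hA0 : A₀.IsHermitian) (hA1 : A₁.IsHermitian)
    (hB0 : B₀.IsHermitian) (hB1 : B₁.IsHermitian)
    (hA02 : A₀ * A₀ = 1) (hA12 : A₁ * A₁ = 1)
    (hB02 : B₀ * B₀ = 1) (hB12 : B₁ * B₁ = 1)
    (ψ : Fin 2 × Fin 2 → ℂ) (hψ : star ψ ⬝ᵥ ψ = 1) :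
    (star ψ ⬝ᵥ (((α : ℂ) • (A₀ ⊗ₖ B₀) + (α : ℂ) • (A₀ ⊗ₖ B₁)
        + A₁ ⊗ₖ B₀ - A₁ ⊗ₖ B₁) *ᵥ ψ)).re ≤ 2 * Real.sqrt (α ^ 2 + 1) :=
  stmt7_general α A₀ A₁ B₀ B₁ hA0 hA1 hB0 hB1 hA02 hA12 hB02 hB12 ψ hψ
end

section
/- Let n ≥ 2 and for k = 1,…,n set A_k = sin((k−1)π/n) X + cos((k−1)π/n) Z and B_k = sin((2k−1)π/(2n)) X + cos((2k−1)π/(2n)) Z, and let |ψ⟩ = (|00⟩+|11⟩)/√2. Then the chained Bell operator C_n = Σ_{k=1}^{n−1} (A_k⊗B_k + A_{k+1}⊗B_k) + A_n⊗B_n − A₁⊗B_n satisfies ⟨ψ|C_n|ψ⟩ = 2n cos(π/(2n)). -/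
/-!
For a state with amplitude `c` on every `|ii⟩`, the expectation of `M ⊗ N` is
`|c|² · tr (M Nᵀ)`; for the maximally entangled state and two real observables
`sin a X + cos a Z`, `sin b X + cos b Z` this is `cos (a - b)`. Each of the `2n` terms of the
chained Bell operator pairs angles differing by `± π / (2n)`, except `A₁ ⊗ Bₙ`, whose angles
differ by `π - π / (2n)`; its minus sign turns `cos (π - π / (2n))` into `cos (π / (2n))` as well.
-/

open Matrix Kronecker Real

lemma dotProduct_kronecker_mulVec_of_diagonal_state {ι R : Type*} [Fintype ι] [DecidableEq ι]
    [CommSemiring R] [StarRing R] (c : R) (M N : Matrix ι ι R) :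
    star (fun p : ι × ι => if p.1 = p.2 then c else 0) ⬝ᵥ
        ((M ⊗ₖ N) *ᵥ fun p => if p.1 = p.2 then c else 0) =
      star c * c * trace (M * Nᵀ) := by
  simp only [dotProduct, Pi.star_apply, apply_ite star, star_zero, mulVec, kroneckerMap_apply,
    mul_ite, mul_zero, Fintype.sum_prod_type, Finset.sum_ite_eq, Finset.mem_univ, ↓reduceIte,
    Finset.mul_sum, ite_mul, zero_mul, Finset.sum_ite_irrel, Finset.sum_const_zero, trace,
    diag_apply, mul_apply, transpose_apply]
  exact Finset.sum_congr rfl fun _ _ => Finset.sum_congr rfl fun _ _ => by ring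

noncomputable def xzObservable (θ : ℝ) : Matrix (Fin 2) (Fin 2) ℂ :=
  (sin θ : ℂ) • !![0, 1; 1, 0] + (cos θ : ℂ) • !![1, 0; 0, -1]

lemma trace_xzObservable_mul_transpose (a b : ℝ) :
    trace (xzObservable a * (xzObservable b)ᵀ) = 2 * cos (a - b) := by
  rw [trace_fin_two]
  simp [xzObservable, mul_apply, Fin.sum_univ_two, Real.cos_sub]
  ring

lemma bell_dotProduct_xzObservable_kronecker_mulVec (a b : ℝ) :
    star (fun p : Fin 2 × Fin 2 => if p.1 = p.2 then ((Real.sqrt 2)⁻¹ : ℂ) else 0) ⬝ᵥ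
        ((xzObservable a ⊗ₖ xzObservable b) *ᵥ
          fun p => if p.1 = p.2 then ((Real.sqrt 2)⁻¹ : ℂ) else 0) =
      cos (a - b) := by
  have hhalf : (Real.sqrt 2)⁻¹ * (Real.sqrt 2)⁻¹ = (2 : ℝ)⁻¹ := by
    rw [← mul_inv, Real.mul_self_sqrt zero_le_two]
  rw [dotProduct_kronecker_mulVec_of_diagonal_state, trace_xzObservable_mul_transpose,
    Complex.star_def, map_inv₀, Complex.conj_ofReal, ← Complex.ofReal_inv, ← Complex.ofReal_mul,
    hhalf]
  push_cast
  ring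
lemma chained_bell_cos_sum (n : ℕ) (hn : n ≠ 0) :
    ∑ k ∈ Finset.Icc 1 (n - 1),
        (cos (((k : ℝ) - 1) * π / n - (2 * k - 1) * π / (2 * n)) +
          cos (((k : ℝ) + 1 - 1) * π / n - (2 * k - 1) * π / (2 * n))) +
      cos (((n : ℝ) - 1) * π / n - (2 * n - 1) * π / (2 * n)) -
      cos ((1 - 1) * π / n - (2 * n - 1) * π / (2 * n)) =
    2 * n * cos (π / (2 * n)) := by
  have hn' : (n : ℝ) ≠ 0 := Nat.cast_ne_zero.mpr hn
  have hterm : ∀ k : ℕ, cos (((k : ℝ) - 1) * π / n - (2 * k - 1) * π / (2 * n)) +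
      cos (((k : ℝ) + 1 - 1) * π / n - (2 * k - 1) * π / (2 * n)) = 2 * cos (π / (2 * n)) := by
    intro k
    rw [show ((k : ℝ) - 1) * π / n - (2 * k - 1) * π / (2 * n) = -(π / (2 * n)) by
      field_simp; ring,
      show ((k : ℝ) + 1 - 1) * π / n - (2 * k - 1) * π / (2 * n) = π / (2 * n) by
      field_simp; ring, cos_neg]
    ring
  have hlast : cos (((n : ℝ) - 1) * π / n - (2 * n - 1) * π / (2 * n)) -
      cos ((1 - 1) * π / n - (2 * n - 1) * π / (2 * n)) = 2 * cos (π / (2 * n)) := by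
    rw [show ((n : ℝ) - 1) * π / n - (2 * n - 1) * π / (2 * n) = -(π / (2 * n)) by
      field_simp; ring,
      show ((1 : ℝ) - 1) * π / n - (2 * n - 1) * π / (2 * n) = -(π - π / (2 * n)) by
      field_simp; ring, cos_neg, cos_neg, cos_pi_sub]
    ring
  rw [add_sub_assoc, hlast, Finset.sum_congr rfl fun k _ => hterm k, Finset.sum_const,
    Nat.card_Icc, Nat.add_sub_cancel, nsmul_eq_mul, Nat.cast_pred (Nat.pos_of_ne_zero hn)]
  ring

theorem stmt11 (n : ℕ) (hn : 2 ≤ n)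
    (X Z : Matrix (Fin 2) (Fin 2) ℂ)
    (hX : X = !![0, 1; 1, 0]) (hZ : Z = !![1, 0; 0, -1])
    (A B : ℕ → Matrix (Fin 2) (Fin 2) ℂ)
    (hA : ∀ k : ℕ, A k = (Real.sin (((k : ℝ) - 1) * π / n) : ℂ) • X
        + (Real.cos (((k : ℝ) - 1) * π / n) : ℂ) • Z)
    (hB : ∀ k : ℕ, B k = (Real.sin ((2 * (k : ℝ) - 1) * π / (2 * n)) : ℂ) • X
        + (Real.cos ((2 * (k : ℝ) - 1) * π / (2 * n)) : ℂ) • Z)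
    (ψ : Fin 2 × Fin 2 → ℂ)
    (hψ : ψ = fun p => if p.1 = p.2 then ((Real.sqrt 2)⁻¹ : ℂ) else 0)
    (C : Matrix (Fin 2 × Fin 2) (Fin 2 × Fin 2) ℂ)
    (hC : C = (∑ k ∈ Finset.Icc 1 (n - 1), (A k ⊗ₖ B k + A (k + 1) ⊗ₖ B k))
        + A n ⊗ₖ B n - A 1 ⊗ₖ B n) :
    star ψ ⬝ᵥ (C *ᵥ ψ) = (2 * n * Real.cos (π / (2 * n)) : ℂ) := by
  subst hX hZ hC
  have hcorr : ∀ j k : ℕ, star ψ ⬝ᵥ ((A j ⊗ₖ B k) *ᵥ ψ) =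
      (cos (((j : ℝ) - 1) * π / n - (2 * k - 1) * π / (2 * n)) : ℂ) := by
    intro j k
    rw [hA, hB, hψ]
    exact bell_dotProduct_xzObservable_kronecker_mulVec _ _
  simp only [sub_mulVec, add_mulVec, sum_mulVec, dotProduct_sub, dotProduct_add, dotProduct_sum,
    hcorr, Nat.cast_add, Nat.cast_one]
  exact_mod_cast chained_bell_cos_sum n (by omega)
end
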